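/- arXiv:quant-ph/0404148 — 2 statements merged into one kernel-verified Lean document; each statement's English description precedes it below -/
import Mathlib

section
/- Let x, y be probability vectors of the same dimension m and x', y' be probability vectors of the same dimension n. If x ≺ y and x' ≺ y', then x ⊕ x' ≺ y ⊕ y' and x ⊗ x' ≺ y ⊗ y'. -/
open Finset

variable {ι κ : Type*}

/-- `eSum x l` is the sum of the `l` largest components of `x`. -/
noncomputable def eSum [Fintype ι] (x : ι → ℝ) (l : ℕ) : ℝ :=
  sSup {r : ℝ | ∃ s : Finset ι, s.card = l ∧ r = ∑ i ∈ s, x i}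

/-- Majorization `x ≺ y` for vectors over the same (finite) index type:
`e_l(x) ≤ e_l(y)` for all `1 ≤ l ≤ n - 1`, with equal total sums. -/
def Maj [Fintype ι] (x y : ι → ℝ) : Prop :=
  (∀ l : ℕ, 1 ≤ l → l < Fintype.card ι → eSum x l ≤ eSum y l) ∧
    ∑ i, x i = ∑ i, y i

/-- A probability vector: nonnegative components summing to 1. -/
def IsProbVec [Fintype ι] (x : ι → ℝ) : Prop :=
  (∀ i, 0 ≤ x i) ∧ ∑ i, x i = 1

/-- Kronecker product of two vectors. -/
def kron (x : ι → ℝ) (c : κ → ℝ) : ι × κ → ℝ := fun p => x p.1 * c p.2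

/-- `k`-fold Kronecker power of a vector. -/
def kpow (x : ι → ℝ) (k : ℕ) : (Fin k → ι) → ℝ := fun f => ∏ j, x (f j)

/-- Direct sum (concatenation) of two vectors. -/
def dsum (x : ι → ℝ) (c : κ → ℝ) : ι ⊕ κ → ℝ := Sum.elim x c

/-- `k`-fold direct sum (concatenation) of `x` with itself. -/
def dpow (x : ι → ℝ) (k : ℕ) : Fin k × ι → ℝ := fun p => x p.2

/-- `x ∈ S°(y)`: all partial-sum inequalities `e_l(x) < e_l(y)` are strict for
`1 ≤ l ≤ n - 1`, and the total sums coincide. -/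
def InteriorS [Fintype ι] (x y : ι → ℝ) : Prop :=
  (∀ l : ℕ, 1 ≤ l → l < Fintype.card ι → eSum x l < eSum y l) ∧
    ∑ i, x i = ∑ i, y i

/-- `d_x`: the number of nonzero components of `x`. -/
noncomputable def dsupp (x : ι → ℝ) : ℕ := Nat.card (Function.support x)

/-- The `α`-Renyi entropy `S^{(α)}(x)`; at `α = 1` it is the Shannon entropy. -/
noncomputable def renyi [Fintype ι] (x : ι → ℝ) (α : ℝ) : ℝ :=
  if α = 1 then -∑ i, x i * Real.logb 2 (x i)
  else (if 0 ≤ α then (1 : ℝ) else -1) / (1 - α) *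
    Real.logb 2 (∑ i, if x i = 0 then 0 else x i ^ α)

/-- The Renyi entropy of `x` is not less than that of `y`. -/
def RenyiGE [Fintype ι] [Fintype κ] (x : ι → ℝ) (y : κ → ℝ) : Prop :=
  (dsupp x > dsupp y ∧ ∀ α : ℝ, 0 ≤ α → renyi y α ≤ renyi x α) ∨
  (dsupp x = dsupp y ∧ ∀ α : ℝ, renyi y α ≤ renyi x α)


section Aux

variable {ι κ : Type*} [Fintype ι] [Fintype κ]

/-- Auxiliary: the sum of positive parts after subtracting `t`. -/
noncomputable def Tf (x : ι → ℝ) (t : ℝ) : ℝ := ∑ i, max (x i - t) 0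

lemma eSum_set_eq (x : ι → ℝ) (l : ℕ) :
    {r : ℝ | ∃ s : Finset ι, s.card = l ∧ r = ∑ i ∈ s, x i} =
      ↑((Finset.univ.powersetCard l).image fun s => ∑ i ∈ s, x i) := by
  ext r
  simp only [Set.mem_setOf_eq, Finset.coe_image, Set.mem_image, Finset.mem_coe,
    Finset.mem_powersetCard]
  constructor
  · rintro ⟨s, h1, h2⟩; exact ⟨s, ⟨s.subset_univ, h1⟩, h2.symm⟩
  · rintro ⟨s, ⟨_, h1⟩, h2⟩; exact ⟨s, h1, h2.symm⟩

lemma le_eSum (x : ι → ℝ) {s : Finset ι} {l : ℕ} (h : s.card = l) :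
    ∑ i ∈ s, x i ≤ eSum x l := by
  rw [eSum, eSum_set_eq]
  refine le_csSup (Finset.bddAbove _) ?_
  simp only [Finset.coe_image, Set.mem_image, Finset.mem_coe, Finset.mem_powersetCard]
  exact ⟨s, ⟨s.subset_univ, h⟩, rfl⟩

lemma eSum_mem (x : ι → ℝ) {l : ℕ} (h : l ≤ Fintype.card ι) :
    ∃ s : Finset ι, s.card = l ∧ eSum x l = ∑ i ∈ s, x i := by
  obtain ⟨s, _, hs⟩ := Finset.exists_subset_card_eq (by simpa using h :
    l ≤ (Finset.univ : Finset ι).card)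
  have hne : ((Finset.univ.powersetCard l).image fun s => ∑ i ∈ s, x i).Nonempty :=
    ⟨∑ i ∈ s, x i, Finset.mem_image_of_mem _
      (Finset.mem_powersetCard.2 ⟨s.subset_univ, hs⟩)⟩
  have hmem := hne.csSup_mem
  rw [eSum, eSum_set_eq]
  rw [Finset.mem_image] at hmem
  obtain ⟨t, ht, hteq⟩ := hmem
  rw [Finset.mem_powersetCard] at ht
  exact ⟨t, ht.2, hteq.symm⟩

lemma eSum_zero (x : ι → ℝ) : eSum x 0 = 0 := by
  obtain ⟨s, h1, h2⟩ := eSum_mem x (Nat.zero_le _)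
  rw [Finset.card_eq_zero] at h1
  simp [h2, h1]

lemma eSum_card (x : ι → ℝ) : eSum x (Fintype.card ι) = ∑ i, x i := by
  obtain ⟨s, h1, h2⟩ := eSum_mem x le_rfl
  rw [(Finset.card_eq_iff_eq_univ s).1 h1] at h2
  exact h2

lemma maj_all {x y : ι → ℝ} (h : Maj x y) : ∀ l ≤ Fintype.card ι, eSum x l ≤ eSum y l := by
  intro l hl
  rcases Nat.eq_zero_or_pos l with h0 | h1
  · simp [h0, eSum_zero]
  rcases eq_or_lt_of_le hl with hc | hc
  · rw [hc, eSum_card, eSum_card]; exact le_of_eq h.2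
  · exact h.1 l h1 hc

lemma eSum_le_Tf (x : ι → ℝ) {l : ℕ} (hl : l ≤ Fintype.card ι) (t : ℝ) :
    eSum x l ≤ l * t + Tf x t := by
  obtain ⟨s, h1, h2⟩ := eSum_mem x hl
  have step1 : ∑ i ∈ s, x i = ∑ i ∈ s, (x i - t) + l * t := by
    rw [Finset.sum_sub_distrib, Finset.sum_const, h1]
    push_cast; ring
  have step2 : ∑ i ∈ s, (x i - t) ≤ ∑ i ∈ s, max (x i - t) 0 :=
    Finset.sum_le_sum fun i _ => le_max_left _ _
  have step3 : ∑ i ∈ s, max (x i - t) 0 ≤ Tf x t :=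
    Finset.sum_le_sum_of_subset_of_nonneg s.subset_univ fun i _ _ => le_max_right _ _
  rw [h2, step1]
  linarith

lemma Tf_le_eSum (x : ι → ℝ) (t : ℝ) :
    ∃ k ≤ Fintype.card ι, Tf x t ≤ eSum x k - k * t := by
  set A := Finset.univ.filter (fun i => t < x i) with hA
  refine ⟨A.card, by simpa using Finset.card_le_univ A, ?_⟩
  have hTf : Tf x t = ∑ i ∈ A, (x i - t) := by
    rw [Tf, ← Finset.sum_filter_add_sum_filter_not Finset.univ (fun i => t < x i)]
    have h1 : ∑ i ∈ Finset.univ.filter (fun i => ¬ t < x i), max (x i - t) 0 = 0 := by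
      refine Finset.sum_eq_zero fun i hi => ?_
      rw [Finset.mem_filter] at hi
      exact max_eq_right (by linarith [hi.2, not_lt.1 hi.2])
    have h2 : ∑ i ∈ A, max (x i - t) 0 = ∑ i ∈ A, (x i - t) := by
      refine Finset.sum_congr rfl fun i hi => ?_
      rw [hA, Finset.mem_filter] at hi
      exact max_eq_left (by linarith [hi.2])
    rw [h1, h2, add_zero]
  rw [hTf, Finset.sum_sub_distrib, Finset.sum_const, nsmul_eq_mul]
  have := le_eSum x (s := A) rfl
  linarith

lemma eSum_concave (y : ι → ℝ) {j : ℕ} (hj : 1 ≤ j) (hj2 : j + 1 ≤ Fintype.card ι) :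
    eSum y (j + 1) + eSum y (j - 1) ≤ eSum y j + eSum y j := by
  classical
  obtain ⟨A, hA1, hA2⟩ := eSum_mem y hj2
  obtain ⟨B, hB1, hB2⟩ := eSum_mem y (l := j - 1) (by omega)
  have hne : (A \ B).Nonempty := by
    rw [← Finset.card_pos]
    have := Finset.le_card_sdiff B A
    omega
  obtain ⟨a, ha⟩ := hne
  rw [Finset.mem_sdiff] at ha
  have key : ∑ i ∈ A, y i + ∑ i ∈ B, y i = ∑ i ∈ A.erase a, y i + ∑ i ∈ insert a B, y i := by
    rw [Finset.sum_insert ha.2, ← Finset.add_sum_erase A y ha.1]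
    ring
  have c1 : (A.erase a).card = j := by
    rw [Finset.card_erase_of_mem ha.1, hA1]
    omega
  have c2 : (insert a B).card = j := by
    rw [Finset.card_insert_of_notMem ha.2, hB1]; omega
  have := le_eSum y c1
  have := le_eSum y c2
  rw [hA2, hB2, key]
  linarith

lemma Tle_to_eSum_le {x y : ι → ℝ} (hsum : ∑ i, x i = ∑ i, y i)
    (hT : ∀ t, Tf x t ≤ Tf y t) {l : ℕ} (hl1 : 1 ≤ l) (hl2 : l < Fintype.card ι) :
    eSum x l ≤ eSum y l := by
  set N := Fintype.card ι with hN
  set d : ℕ → ℝ := fun j => eSum y (j + 1) - eSum y j with hd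
  set t : ℝ := d (l - 1) with ht
  have hstep : ∀ j, j + 1 < N → d (j + 1) ≤ d j := by
    intro j hj
    have := eSum_concave y (j := j + 1) (by omega) (by omega)
    simp only [hd]
    have : eSum y (j + 1 + 1) + eSum y (j + 1 - 1) ≤ eSum y (j+1) + eSum y (j+1) := this
    have hjj : j + 1 - 1 = j := by omega
    rw [hjj] at this
    linarith
  have hanti : ∀ b, b < N → ∀ a, a ≤ b → d b ≤ d a := by
    intro b
    induction b with
    | zero =>
      intro _ a ha
      have : a = 0 := Nat.le_zero.mp ha
      subst this; exact le_rfl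
    | succ b ih =>
      intro hb a ha
      rcases eq_or_lt_of_le ha with rfl | ha'
      · exact le_rfl
      · exact le_trans (hstep b hb) (ih (by omega) a (by omega))
  have hanti0 : ∀ b, b < N → ∀ a, a ≤ b → d b ≤ d a := hanti
  -- key: ∀ k ≤ N, eSum y k - k * t ≤ eSum y l - l * t
  have hl1' : l - 1 + 1 = l := by omega
  have key_up : ∀ k, l ≤ k → k ≤ N → eSum y k - k * t ≤ eSum y l - l * t := by
    intro k hk hkN
    induction k, hk using Nat.le_induction with
    | base => exact le_rfl
    | succ k hk ih =>
      have hdk : d k ≤ t := by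
        rw [ht]
        exact hanti0 k (by omega) (l - 1) (by omega)
      have hih := ih (by omega)
      have : eSum y (k + 1) = eSum y k + d k := by simp [hd]
      rw [this]
      push_cast
      linarith
  have key_down : ∀ mm, mm ≤ l → eSum y (l - mm) - (l - mm : ℕ) * t ≤ eSum y l - l * t := by
    intro mm
    induction mm with
    | zero => intro _; simp
    | succ mm ih =>
      intro hmm
      set a := l - (mm + 1) with ha
      have ha1 : a + 1 = l - mm := by omega
      have hta : t ≤ d a := by
        rw [ht]
        exact hanti0 (l - 1) (by omega) a (by omega)
      have hih := ih (by omega)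
      rw [← ha1] at hih
      have hgoal : eSum y (a + 1) = eSum y a + d a := by simp [hd]
      rw [hgoal] at hih
      have hcast : ((a + 1 : ℕ) : ℝ) = (a : ℝ) + 1 := by push_cast; ring
      rw [hcast] at hih
      linarith
  have key : ∀ k ≤ N, eSum y k - k * t ≤ eSum y l - l * t := by
    intro k hk
    rcases le_or_gt l k with hlk | hlk
    · exact key_up k hlk hk
    · have := key_down (l - k) (by omega)
      have hk' : l - (l - k) = k := by omega
      rw [hk'] at this
      exact this
  obtain ⟨k, hkN, hTk⟩ := Tf_le_eSum y t
  have h1 : eSum x l ≤ l * t + Tf x t := eSum_le_Tf x (le_of_lt hl2) t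
  have h2 := hT t
  have h3 := key k hkN
  linarith

lemma maj_Tle {x y : ι → ℝ} (h : Maj x y) : ∀ t, Tf x t ≤ Tf y t := by
  intro t
  obtain ⟨k, hk, hTk⟩ := Tf_le_eSum x t
  have h1 := maj_all h k hk
  have h2 := eSum_le_Tf y hk t
  linarith

lemma Tf_dsum (x : ι → ℝ) (c : κ → ℝ) (t : ℝ) :
    Tf (dsum x c) t = Tf x t + Tf c t := by
  rw [Tf, Fintype.sum_sum_type]
  rfl

lemma Tf_kron_le {x y : ι → ℝ} {c : κ → ℝ} (hx : ∀ i, 0 ≤ x i) (hc : ∀ j, 0 ≤ c j)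
    (hsum : ∑ i, x i = ∑ i, y i) (hT : ∀ s, Tf x s ≤ Tf y s) (t : ℝ) :
    Tf (kron x c) t ≤ Tf (kron y c) t := by
  rcases lt_or_ge t 0 with ht | ht
  · have e1 : Tf (kron x c) t = ∑ p : ι × κ, (x p.1 * c p.2 - t) := by
      refine Finset.sum_congr rfl fun p _ => ?_
      have hk : kron x c p = x p.1 * c p.2 := rfl
      exact max_eq_left (by rw [hk]; nlinarith [mul_nonneg (hx p.1) (hc p.2)])
    have e2 : ∑ p : ι × κ, (y p.1 * c p.2 - t) ≤ Tf (kron y c) t :=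
      Finset.sum_le_sum fun p _ => le_max_left _ _
    have e3 : ∑ p : ι × κ, (x p.1 * c p.2 - t) = ∑ p : ι × κ, (y p.1 * c p.2 - t) := by
      simp only [Finset.sum_sub_distrib, Fintype.sum_prod_type, ← Finset.mul_sum,
        ← Finset.sum_mul, hsum]
    rw [e1, e3]
    exact e2
  · rw [Tf, Tf, Fintype.sum_prod_type_right, Fintype.sum_prod_type_right]
    refine Finset.sum_le_sum fun j _ => ?_
    rcases eq_or_lt_of_le (hc j) with hcj | hcj
    · simp [kron, ← hcj, max_eq_right (by linarith : -t ≤ 0)]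
    · have hkey : ∀ a : ℝ, max (a * c j - t) 0 = c j * max (a - t / c j) 0 := by
        intro a
        rw [mul_max_of_nonneg _ _ (le_of_lt hcj), mul_zero]
        congr 1
        field_simp
      have hx' : ∑ i, max (kron x c (i, j) - t) 0 = c j * Tf x (t / c j) := by
        rw [Tf, Finset.mul_sum]
        exact Finset.sum_congr rfl fun i _ => hkey (x i)
      have hy' : ∑ i, max (kron y c (i, j) - t) 0 = c j * Tf y (t / c j) := by
        rw [Tf, Finset.mul_sum]
        exact Finset.sum_congr rfl fun i _ => hkey (y i)
      rw [hx', hy']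
      exact mul_le_mul_of_nonneg_left (hT _) (le_of_lt hcj)

lemma Tf_kron_comm (x : ι → ℝ) (c : κ → ℝ) (t : ℝ) :
    Tf (kron x c) t = Tf (kron c x) t := by
  rw [Tf, Tf]
  exact Fintype.sum_equiv (Equiv.prodComm ι κ) _ _ fun p => by
    simp [kron, mul_comm]

lemma sum_kron (x : ι → ℝ) (c : κ → ℝ) :
    ∑ p : ι × κ, kron x c p = (∑ i, x i) * (∑ j, c j) := by
  rw [Finset.sum_mul_sum, Fintype.sum_prod_type]
  rfl

end Aux

/-- If `x ≺ y` and `x' ≺ y'` (probability vectors of dimensions `m` and `n`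
respectively), then `x ⊕ x' ≺ y ⊕ y'` and `x ⊗ x' ≺ y ⊗ y'`. -/
theorem stmt0 {m n : ℕ} (x y : Fin m → ℝ) (x' y' : Fin n → ℝ)
    (hx : IsProbVec x) (hy : IsProbVec y) (hx' : IsProbVec x') (hy' : IsProbVec y')
    (h : Maj x y) (h' : Maj x' y') :
    Maj (dsum x x') (dsum y y') ∧ Maj (kron x x') (kron y y') := by
  have hd : Maj (dsum x x') (dsum y y') := by
    constructor
    · intro l hl1 hl2
      refine Tle_to_eSum_le ?_ ?_ hl1 hl2
      · rw [Fintype.sum_sum_type, Fintype.sum_sum_type]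
        simp only [dsum, Sum.elim_inl, Sum.elim_inr]
        rw [h.2, h'.2]
      · intro t
        rw [Tf_dsum, Tf_dsum]
        exact add_le_add (maj_Tle h t) (maj_Tle h' t)
    · rw [Fintype.sum_sum_type, Fintype.sum_sum_type]
      simp only [dsum, Sum.elim_inl, Sum.elim_inr]
      rw [h.2, h'.2]
  have hsumk : ∑ p : Fin m × Fin n, kron x x' p = ∑ p : Fin m × Fin n, kron y y' p := by
    rw [sum_kron, sum_kron, h.2, h'.2]
  have hk : Maj (kron x x') (kron y y') := by
    constructor
    · intro l hl1 hl2
      refine Tle_to_eSum_le hsumk ?_ hl1 hl2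
      intro t
      have h1 : Tf (kron x x') t ≤ Tf (kron y x') t :=
        Tf_kron_le hx.1 hx'.1 h.2 (maj_Tle h) t
      have h2 : Tf (kron y x') t ≤ Tf (kron y y') t := by
        rw [Tf_kron_comm y x', Tf_kron_comm y y']
        exact Tf_kron_le hx'.1 hy.1 h'.2 (maj_Tle h') t
      linarith
    · exact hsumk
  exact ⟨hd, hk⟩
end

section
/- Let x and y be n-dimensional probability vectors whose components are arranged in nonincreasing order. If x ∈ M(y) and y ∈ M(x), then x = y. That is, x and y are interconvertible under multiple-copy transformations if and only if they are equal (up to ordering of components). -/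
open Finset

variable {ι κ : Type*}

/-!
Power sums detect multi-copy majorization. Since `t ↦ t ^ p` is convex on `[0, ∞)`, `a ≺ b`
gives `∑ a_i ^ p ≤ ∑ b_i ^ p` (Karamata's inequality, proved by summation by parts on the
decreasing rearrangements), and power sums are multiplicative under Kronecker products, so
`x^{⊗k} ≺ y^{⊗k}` already gives `∑ x_i ^ p ≤ ∑ y_i ^ p`. Mutual convertibility therefore makes all
power sums of `x` and `y` equal. Two nonincreasing nonnegative vectors with equal power sums agree:
if they agree before index `j`, their tails have equal power sums, and as `p → ∞` the tail power
sums are dominated by `x_j ^ p` and `y_j ^ p` up to a bounded factor, forcing `x_j = y_j`.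
-/

theorem Antitone.mul_sum_range_le_sum_range_mul {c d : ℕ → ℝ} (hc : Antitone c) {N : ℕ}
    (hd : ∀ l ≤ N, 0 ≤ ∑ i ∈ range l, d i) :
    c N * ∑ i ∈ range N, d i ≤ ∑ i ∈ range N, c i * d i := by
  induction N with
  | zero => simp
  | succ N ih =>
    have hprev := ih fun l hl => hd l (by omega)
    have hlast : 0 ≤ ∑ i ∈ range N, d i + d N := by simpa [sum_range_succ] using hd (N + 1) le_rfl
    rw [sum_range_succ, sum_range_succ]
    calc c (N + 1) * (∑ i ∈ range N, d i + d N)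
        ≤ c N * (∑ i ∈ range N, d i + d N) := mul_le_mul_of_nonneg_right (hc N.le_succ) hlast
      _ ≤ ∑ i ∈ range N, c i * d i + c N * d N := by
        linarith [mul_add (c N) (∑ i ∈ range N, d i) (d N)]

theorem sum_range_pow_le_of_sum_range_le {A B : ℕ → ℝ} (hA : Antitone A) (hB : Antitone B)
    (hA0 : ∀ i, 0 ≤ A i) (hB0 : ∀ i, 0 ≤ B i) {N : ℕ}
    (hle : ∀ l ≤ N, ∑ i ∈ range l, A i ≤ ∑ i ∈ range l, B i)
    (heq : ∑ i ∈ range N, A i = ∑ i ∈ range N, B i) (p : ℕ) :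
    ∑ i ∈ range N, A i ^ p ≤ ∑ i ∈ range N, B i ^ p := by
  -- `B i ^ p - A i ^ p = c i * (B i - A i)`, with `c` antitone since `A` and `B` are
  set c : ℕ → ℝ := fun i => ∑ q ∈ range p, B i ^ q * A i ^ (p - 1 - q)
  have hc : Antitone c := fun i j hij => sum_le_sum fun q _ =>
    mul_le_mul (pow_le_pow_left₀ (hB0 j) (hB hij) q) (pow_le_pow_left₀ (hA0 j) (hA hij) _)
      (pow_nonneg (hA0 j) _) (pow_nonneg (hB0 i) _)
  have habel := hc.mul_sum_range_le_sum_range_mul (d := fun i => B i - A i) (N := N)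
    fun l hl => by simpa [sum_sub_distrib] using hle l hl
  simp only [sum_sub_distrib, heq, sub_self, mul_zero, c, geom_sum₂_mul] at habel
  linarith

section Majorization

variable [Fintype ι]

theorem Antitone.sum_le_sum_range_card {A : ℕ → ℝ} (hA : Antitone A) (s : Finset ℕ) :
    ∑ i ∈ s, A i ≤ ∑ i ∈ range s.card, A i := by
  induction s using Finset.induction_on_max with
  | empty => simp
  | insert m s hlt ih =>
    have hm : m ∉ s := fun h => lt_irrefl m (hlt m h)
    have hcard : s.card ≤ m := by
      simpa using card_le_card (fun i hi => mem_range.2 (hlt i hi) : s ⊆ range m)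
    rw [sum_insert hm, card_insert_of_notMem hm, sum_range_succ]
    linarith [hA hcard]

theorem Antitone.eSum_comp_equiv {A : ℕ → ℝ} (hA : Antitone A) {N : ℕ} (e : ι ≃ Fin N)
    {l : ℕ} (hl : l ≤ N) :
    eSum (fun i => A (e i)) l = ∑ i ∈ range l, A i := by
  have hinj : Function.Injective fun i => (e i : ℕ) := Fin.val_injective.comp e.injective
  have hsum (s : Finset ι) : ∑ i ∈ s, A (e i) = ∑ j ∈ s.image (fun i => (e i : ℕ)), A j :=
    (sum_image fun i _ j _ h => hinj h).symm
  set s := univ.filter fun i => (e i : ℕ) < l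
  have hs : s.image (fun i => (e i : ℕ)) = range l := by
    ext j
    simp only [s, mem_image, mem_filter, mem_univ, true_and, mem_range]
    refine ⟨fun ⟨i, hi, hij⟩ => hij ▸ hi,
      fun hj => ⟨e.symm ⟨j, by omega⟩, by simpa using hj, by simp⟩⟩
  have hscard : s.card = l := by rw [← card_range l, ← hs, card_image_of_injective _ hinj]
  refine IsGreatest.csSup_eq ⟨⟨s, hscard, by rw [hsum, hs]⟩, ?_⟩
  rintro r ⟨t, rfl, rfl⟩
  rw [hsum, ← card_image_of_injective t hinj]
  exact hA.sum_le_sum_range_card _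

theorem exists_antitone_eq_comp_equivFin (a : ι → ℝ) (ha : ∀ i, 0 ≤ a i) :
    ∃ A : ℕ → ℝ, Antitone A ∧ (∀ j, 0 ≤ A j) ∧
      ∃ e : ι ≃ Fin (Fintype.card ι), a = fun i => A (e i) := by
  set N := Fintype.card ι
  let e₀ := Fintype.equivFin ι
  let g := a ∘ e₀.symm
  let σ : Equiv.Perm (Fin N) := Fin.revPerm.trans (Tuple.sort g)
  have hσ : Antitone (g ∘ σ) := fun i j hij => Tuple.monotone_sort g (Fin.rev_le_rev.2 hij)
  -- extending by zero keeps the sorted vector antitone, as its entries are nonnegative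
  refine ⟨fun j => if h : j < N then g (σ ⟨j, h⟩) else 0, fun i j hij => ?_, fun j => ?_,
    e₀.trans σ.symm, funext fun i => ?_⟩
  · dsimp only
    split_ifs with hj hi hi
    · exact hσ (Fin.mk_le_mk.2 hij)
    · omega
    · exact ha _
    · exact le_rfl
  · dsimp only
    split_ifs
    · exact ha _
    · exact le_rfl
  · simp [g, e₀]

theorem Maj.sum_pow_le {a b : ι → ℝ} (hab : Maj a b) (ha : ∀ i, 0 ≤ a i) (hb : ∀ i, 0 ≤ b i)
    (p : ℕ) : ∑ i, a i ^ p ≤ ∑ i, b i ^ p := by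
  set N := Fintype.card ι
  have hsum (f : ℕ → ℝ) (e : ι ≃ Fin N) : ∑ i, f (e i) = ∑ j ∈ range N, f j := by
    rw [e.sum_comp (fun j => f j), Fin.sum_univ_eq_sum_range]
  obtain ⟨A, hA, hA0, ea, rfl⟩ := exists_antitone_eq_comp_equivFin a ha
  obtain ⟨B, hB, hB0, eb, rfl⟩ := exists_antitone_eq_comp_equivFin b hb
  have htot : ∑ j ∈ range N, A j = ∑ j ∈ range N, B j := by
    rw [← hsum A ea, ← hsum B eb]
    exact hab.2
  rw [hsum (A · ^ p) ea, hsum (B · ^ p) eb]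
  refine sum_range_pow_le_of_sum_range_le hA hB hA0 hB0 (fun l hl => ?_) htot p
  rcases Nat.eq_zero_or_pos l with rfl | hl0
  · simp
  rcases hl.lt_or_eq with hlN | rfl
  · rw [← hA.eSum_comp_equiv ea hl, ← hB.eSum_comp_equiv eb hl]
    exact hab.1 l hl0 hlN
  · exact htot.le

theorem sum_kpow_pow (x : ι → ℝ) (k p : ℕ) :
    ∑ f, kpow x k f ^ p = (∑ i, x i ^ p) ^ k := by
  rw [sum_pow', Fintype.piFinset_univ]
  simp only [kpow, prod_pow]

theorem Maj.sum_pow_le_of_kpow {x y : ι → ℝ} {k : ℕ} (h : Maj (kpow x k) (kpow y k))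
    (hk : k ≠ 0) (hx : ∀ i, 0 ≤ x i) (hy : ∀ i, 0 ≤ y i) (p : ℕ) :
    ∑ i, x i ^ p ≤ ∑ i, y i ^ p := by
  refine le_of_pow_le_pow_left₀ hk (sum_nonneg fun i _ => pow_nonneg (hy i) p) ?_
  rw [← sum_kpow_pow, ← sum_kpow_pow]
  exact h.sum_pow_le (fun f => prod_nonneg fun j _ => hx _) (fun f => prod_nonneg fun j _ => hy _) p

end Majorization

theorem le_of_forall_pow_le_mul_pow {u v C : ℝ} (hv : 0 ≤ v) (h : ∀ p : ℕ, u ^ p ≤ C * v ^ p) :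
    u ≤ v := by
  by_contra! hvu
  rcases hv.eq_or_lt with rfl | hv
  · simpa [hvu.not_ge] using h 1
  · obtain ⟨p, hp⟩ := pow_unbounded_of_one_lt C ((one_lt_div hv).2 hvu)
    rw [div_pow, lt_div_iff₀ (pow_pos hv p)] at hp
    linarith [h p]

section PowerSums

variable [Fintype ι] [LinearOrder ι] {x y : ι → ℝ}

theorem le_of_sum_pow_eq_of_eq_of_lt (hy : Antitone y) (hx0 : ∀ i, 0 ≤ x i)
    (hy0 : ∀ i, 0 ≤ y i) (hE : ∀ p : ℕ, ∑ i, x i ^ p = ∑ i, y i ^ p) {j : ι}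
    (hpre : ∀ i < j, x i = y i) : x j ≤ y j := by
  set T := univ.filter fun i => ¬ i < j
  have htail (p : ℕ) : ∑ i ∈ T, x i ^ p = ∑ i ∈ T, y i ^ p := by
    have hhead : ∑ i ∈ univ.filter (· < j), x i ^ p = ∑ i ∈ univ.filter (· < j), y i ^ p :=
      sum_congr rfl fun i hi => by rw [hpre i (mem_filter.1 hi).2]
    have hsplit := hE p
    rw [← sum_filter_add_sum_filter_not univ (· < j),
      ← sum_filter_add_sum_filter_not univ (· < j) (fun i => y i ^ p)] at hsplit
    linarith
  refine le_of_forall_pow_le_mul_pow (hy0 j) (C := T.card) fun p => ?_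
  calc x j ^ p ≤ ∑ i ∈ T, x i ^ p := single_le_sum (fun i _ => pow_nonneg (hx0 i) p) (by simp [T])
    _ = ∑ i ∈ T, y i ^ p := htail p
    _ ≤ T.card • y j ^ p := sum_le_card_nsmul _ _ _ fun i hi =>
        pow_le_pow_left₀ (hy0 i) (hy (not_lt.1 (mem_filter.1 hi).2)) p
    _ = T.card * y j ^ p := nsmul_eq_mul _ _

theorem eq_of_sum_pow_eq (hx : Antitone x) (hy : Antitone y) (hx0 : ∀ i, 0 ≤ x i)
    (hy0 : ∀ i, 0 ≤ y i) (hE : ∀ p : ℕ, ∑ i, x i ^ p = ∑ i, y i ^ p) : x = y := by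
  funext j
  induction j using WellFoundedLT.induction with
  | _ j ih =>
    exact (le_of_sum_pow_eq_of_eq_of_lt hy hx0 hy0 hE ih).antisymm
      (le_of_sum_pow_eq_of_eq_of_lt hx hy0 hx0 (fun p => (hE p).symm) fun i hi => (ih i hi).symm)

end PowerSums

/-- If `x ∈ M(y)` and `y ∈ M(x)` (both nonincreasingly ordered probability
vectors), then `x = y`. -/
theorem stmt6 {n : ℕ} (x y : Fin n → ℝ)
    (hx : IsProbVec x) (hy : IsProbVec y) (hxa : Antitone x) (hya : Antitone y)
    (h1 : ∃ k : ℕ, 1 ≤ k ∧ Maj (kpow x k) (kpow y k))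
    (h2 : ∃ k : ℕ, 1 ≤ k ∧ Maj (kpow y k) (kpow x k)) :
    x = y := by
  obtain ⟨k, hk, hxy⟩ := h1
  obtain ⟨m, hm, hyx⟩ := h2
  refine eq_of_sum_pow_eq hxa hya hx.1 hy.1 fun p => le_antisymm ?_ ?_
  · exact hxy.sum_pow_le_of_kpow (by omega) hx.1 hy.1 p
  · exact hyx.sum_pow_le_of_kpow (by omega) hy.1 hx.1 p
end
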